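/- Let Γ and Δ be graphs, let 𝔤 : AΓ → AC(AΓ) and 𝔥 : AΔ → AC(AΔ) be the canonical coalgebra structure maps sending each vertex generator v to [v], and let f : AΓ → AΔ be a group homomorphism. Then f = Aφ for some graph homomorphism φ : Γ → Δ if and only if f is an AC-cohomomorphism, i.e. 𝔥 ∘ f = (ACf) ∘ 𝔤. -/

import Mathlib

/-- A (reflexive, symmetric) graph: a set of vertices with a reflexive
symmetric relation. -/
structure Gph : Type 1 where
  V : Type
  rel : V → V → Prop
  refl : ∀ v, rel v v
  symm : ∀ {v w}, rel v w → rel w v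

/-- A homomorphism of graphs: a function on vertices preserving the relation. -/
@[ext]
structure GphHom (Γ Δ : Gph) where
  toFun : Γ.V → Δ.V
  map_rel : ∀ {v w}, Γ.rel v w → Δ.rel (toFun v) (toFun w)

/-- The identity graph homomorphism. -/
def GphHom.id (Γ : Gph) : GphHom Γ Γ :=
  ⟨fun v => v, fun h => h⟩

/-- Composition of graph homomorphisms. -/
def GphHom.comp {Γ Δ Θ : Gph} (ψ : GphHom Δ Θ) (φ : GphHom Γ Δ) : GphHom Γ Θ :=
  ⟨fun v => ψ.toFun (φ.toFun v), fun h => ψ.map_rel (φ.map_rel h)⟩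

/-- The commutator relators of the right-angled Artin group of `Γ`. -/
def raagRels (Γ : Gph) : Set (FreeGroup Γ.V) :=
  { r | ∃ v w, Γ.rel v w ∧
      r = FreeGroup.of v * FreeGroup.of w * (FreeGroup.of v)⁻¹ * (FreeGroup.of w)⁻¹ }

/-- The right-angled Artin group of a graph `Γ`: generated by the vertices,
with commutation relations given by the edges. -/
abbrev Raag (Γ : Gph) : Type :=
  PresentedGroup (raagRels Γ)

/-- The image of a vertex `v` as a generator of the right-angled Artin group. -/
def Raag.of {Γ : Gph} (v : Γ.V) : Raag Γ :=
  PresentedGroup.of v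

/-- Related vertices commute in the right-angled Artin group. -/
theorem Raag.commute_of {Γ : Gph} {v w : Γ.V} (h : Γ.rel v w) :
    Commute (Raag.of v) (Raag.of w) := by
  have h1 : (PresentedGroup.mk (raagRels Γ))
      (FreeGroup.of v * FreeGroup.of w * (FreeGroup.of v)⁻¹ * (FreeGroup.of w)⁻¹) = 1 := by
    apply (QuotientGroup.eq_one_iff _).2
    exact Subgroup.subset_normalClosure ⟨v, w, h, rfl⟩
  rw [← commutatorElement_eq_one_iff_commute]
  simpa only [commutatorElement_def, map_mul, map_inv, Raag.of, PresentedGroup.of] using h1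

/-- The universal property of the right-angled Artin group. -/
def Raag.lift {Γ : Gph} {G : Type*} [Group G] (f : Γ.V → G)
    (hf : ∀ {v w}, Γ.rel v w → Commute (f v) (f w)) : Raag Γ →* G :=
  PresentedGroup.toGroup (f := f) (by
    rintro r ⟨v, w, hvw, rfl⟩
    have := commutatorElement_eq_one_iff_commute.2 (hf hvw)
    rw [commutatorElement_def] at this
    simpa only [map_mul, map_inv, FreeGroup.lift_apply_of] using this)

@[simp]
theorem Raag.lift_of {Γ : Gph} {G : Type*} [Group G] (f : Γ.V → G)
    (hf : ∀ {v w}, Γ.rel v w → Commute (f v) (f w)) (v : Γ.V) :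
    Raag.lift f hf (Raag.of v) = f v :=
  PresentedGroup.toGroup.of _

theorem Raag.hom_ext {Γ : Gph} {G : Type*} [Group G] {f g : Raag Γ →* G}
    (h : ∀ v, f (Raag.of v) = g (Raag.of v)) : f = g :=
  PresentedGroup.ext h

/-- The group homomorphism `Aφ` induced by a graph homomorphism `φ`. -/
def GphHom.map {Γ Δ : Gph} (φ : GphHom Γ Δ) : Raag Γ →* Raag Δ :=
  Raag.lift (fun v => Raag.of (φ.toFun v)) (fun h => Raag.commute_of (φ.map_rel h))

@[simp]
theorem GphHom.map_of {Γ Δ : Gph} (φ : GphHom Γ Δ) (v : Γ.V) :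
    φ.map (Raag.of v) = Raag.of (φ.toFun v) :=
  Raag.lift_of _ (fun h => Raag.commute_of (φ.map_rel h)) v

/-- The commutation graph of a group `G`: vertices are elements of `G`,
related exactly when they commute. -/
abbrev commGraph (G : Type) [Group G] : Gph where
  V := G
  rel g h := g * h = h * g
  refl _ := rfl
  symm h := h.symm

/-- `AC G`: the right-angled Artin group of the commutation graph of `G`. -/
abbrev AC (G : Type) [Group G] : Type :=
  Raag (commGraph G)

/-- `ACf : ACG →* ACH`, `[g] ↦ [f g]`, induced by a group homomorphism `f`. -/
def ACmap {G H : Type} [Group G] [Group H] (f : G →* H) : AC G →* AC H :=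
  GphHom.map (Γ := commGraph G) (Δ := commGraph H)
    ⟨f, fun {a b} h => show f a * f b = f b * f a by
      rw [← map_mul, show a * b = b * a from h, map_mul]⟩

@[simp]
theorem ACmap_of {G H : Type} [Group G] [Group H] (f : G →* H) (g : G) :
    ACmap f (Raag.of (Γ := commGraph G) g) = Raag.of (Γ := commGraph H) (f g) :=
  GphHom.map_of _ _

/-- The counit `ε_G : ACG →* G`, `[g] ↦ g`. -/
def ACcounit (G : Type) [Group G] : AC G →* G :=
  Raag.lift (Γ := commGraph G) (fun g => g) (fun h => h)

@[simp]
theorem ACcounit_of {G : Type} [Group G] (g : G) :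
    ACcounit G (Raag.of (Γ := commGraph G) g) = g :=
  Raag.lift_of (Γ := commGraph G) (fun g => g) (fun h => h) g

/-- The comultiplication `δ_G : ACG →* AC(ACG)`, `[g] ↦ [[g]]`. -/
def ACcomul (G : Type) [Group G] : AC G →* AC (AC G) :=
  Raag.lift (Γ := commGraph G)
    (fun g => Raag.of (Γ := commGraph (AC G)) (Raag.of (Γ := commGraph G) g))
    (fun h => Raag.commute_of (Raag.commute_of h))

@[simp]
theorem ACcomul_of {G : Type} [Group G] (g : G) :
    ACcomul G (Raag.of (Γ := commGraph G) g) =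
      Raag.of (Γ := commGraph (AC G)) (Raag.of (Γ := commGraph G) g) :=
  Raag.lift_of (Γ := commGraph G) _ (fun h => Raag.commute_of (Raag.commute_of h)) g

/-- The canonical `AC`-coalgebra structure map on a right-angled Artin group,
sending each vertex generator `v` to `[v]`. -/
def raagCoalgStr (Γ : Gph) : Raag Γ →* AC (Raag Γ) :=
  Raag.lift (fun v => Raag.of (Γ := commGraph (Raag Γ)) (Raag.of v))
    (fun h => Raag.commute_of (Raag.commute_of h))

@[simp]
theorem raagCoalgStr_of {Γ : Gph} (v : Γ.V) :
    raagCoalgStr Γ (Raag.of v) = Raag.of (Γ := commGraph (Raag Γ)) (Raag.of v) :=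
  Raag.lift_of _ (fun h => Raag.commute_of (Raag.commute_of h)) v

/-- An `AC`-coalgebra structure on a group `G` is a group homomorphism
`𝔤 : G →* ACG` satisfying the counit and coassociativity laws. -/
def IsACCoalgebra {G : Type} [Group G] (𝔤 : G →* AC G) : Prop :=
  (ACcounit G).comp 𝔤 = MonoidHom.id G ∧ (ACmap 𝔤).comp 𝔤 = (ACcomul G).comp 𝔤

/-- `f` is an `AC`-cohomomorphism from `(G, 𝔤)` to `(H, 𝔥)`. -/
def IsACCohom {G H : Type} [Group G] [Group H]
    (𝔤 : G →* AC G) (𝔥 : H →* AC H) (f : G →* H) : Prop :=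
  𝔥.comp f = (ACmap f).comp 𝔤
/-!
A cohomomorphism must send every generator `v` of `AΓ` to an element `x = f v` of `AΔ` with
`𝔥 x = [x]`. Abelianizing `AC(AΔ)` onto the free abelian group on the elements of `AΔ`, the
left side becomes a combination of generators of `AΔ` while the right side is the basis
vector of `x`, so `x` is a generator `w` of `AΔ`. The resulting vertex map `v ↦ w` is a graph
homomorphism because two generators of a RAAG commute only if their vertices are related, as
one sees by sending them to two non-commuting transpositions.
-/

theorem Raag.exists_lift_of_not_rel {Γ : Gph} {G : Type*} [Group G] {a b : Γ.V}
    (hab : ¬ Γ.rel a b) (x y : G) :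
    ∃ F : Raag Γ →* G, F (Raag.of a) = x ∧ F (Raag.of b) = y := by
  classical
  have hne : a ≠ b := fun h => hab (h ▸ Γ.refl a)
  let F : Γ.V → G := fun v => if v = a then x else if v = b then y else 1
  have hF : ∀ {v w}, Γ.rel v w → Commute (F v) (F w) := by
    intro v w hvw
    by_cases hva : v = a <;> by_cases hvb : v = b <;> by_cases hwa : w = a <;>
      by_cases hwb : w = b <;> subst_vars <;> simp_all [F, Commute.refl, Γ.symm hvw]
  exact ⟨Raag.lift F hF, by simp [F], by simp [F, hne.symm]⟩

theorem Raag.rel_of_commute {Γ : Gph} {a b : Γ.V}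
    (h : Commute (Raag.of a) (Raag.of b)) : Γ.rel a b := by
  by_contra hab
  obtain ⟨F, ha, hb⟩ :=
    Raag.exists_lift_of_not_rel hab (Equiv.swap 0 1 : Equiv.Perm (Fin 3)) (Equiv.swap 1 2)
  have hcomm := h.map F
  rw [ha, hb] at hcomm
  exact absurd hcomm.eq (by decide)

noncomputable def Raag.toFinsupp (Γ : Gph) : Raag Γ →* Multiplicative (Γ.V →₀ ℤ) :=
  Raag.lift (fun v => Multiplicative.ofAdd (Finsupp.single v 1)) (fun _ => Commute.all _ _)

@[simp]
theorem Raag.toFinsupp_of {Γ : Gph} (v : Γ.V) :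
    Raag.toFinsupp Γ (Raag.of v) = Multiplicative.ofAdd (Finsupp.single v 1) :=
  Raag.lift_of _ (fun _ => Commute.all _ _) v

theorem Raag.toFinsupp_raagCoalgStr {Γ : Gph} (x : Raag Γ) :
    (Raag.toFinsupp (commGraph (Raag Γ)) (raagCoalgStr Γ x)).toAdd =
      Finsupp.mapDomain Raag.of (Raag.toFinsupp Γ x).toAdd := by
  have hcomp : (Raag.toFinsupp _).comp (raagCoalgStr Γ) =
      (Finsupp.mapDomain.addMonoidHom Raag.of).toMultiplicative.comp (Raag.toFinsupp Γ) :=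
    Raag.hom_ext fun v => by
      rw [MonoidHom.comp_apply, raagCoalgStr_of, Raag.toFinsupp_of]
      simp [Finsupp.mapDomain_single]
  exact congr_arg Multiplicative.toAdd (DFunLike.congr_fun hcomp x)

theorem Raag.mem_range_of_of_raagCoalgStr_eq {Γ : Gph} {x : Raag Γ}
    (h : raagCoalgStr Γ x = Raag.of (Γ := commGraph (Raag Γ)) x) :
    x ∈ Set.range (Raag.of (Γ := Γ)) := by
  classical
  have hsingle := Raag.toFinsupp_raagCoalgStr x
  rw [h, Raag.toFinsupp_of, toAdd_ofAdd] at hsingle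
  have hx : x ∈ (Finsupp.mapDomain Raag.of (Raag.toFinsupp Γ x).toAdd).support := by
    simp [← hsingle]
  obtain ⟨v, -, hv⟩ := Finset.mem_image.mp (Finsupp.mapDomain_support hx)
  exact ⟨v, hv⟩

theorem GphHom.isACCohom_map {Γ Δ : Gph} (φ : GphHom Γ Δ) :
    IsACCohom (raagCoalgStr Γ) (raagCoalgStr Δ) φ.map :=
  Raag.hom_ext fun v => by simp

/-- A group homomorphism `f : AΓ →* AΔ` between right-angled Artin groups is
induced by a graph homomorphism if and only if it is an `AC`-cohomomorphism
with respect to the canonical coalgebra structure maps. -/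
theorem eq_map_iff_isACCohom {Γ Δ : Gph} (f : Raag Γ →* Raag Δ) :
    (∃ φ : GphHom Γ Δ, f = φ.map) ↔
      (raagCoalgStr Δ).comp f = (ACmap f).comp (raagCoalgStr Γ) := by
  refine ⟨fun ⟨φ, hφ⟩ => hφ ▸ φ.isACCohom_map, fun hf => ?_⟩
  have hgen : ∀ v : Γ.V, f (Raag.of v) ∈ Set.range (Raag.of (Γ := Δ)) := fun v =>
    Raag.mem_range_of_of_raagCoalgStr_eq (by simpa using DFunLike.congr_fun hf (Raag.of v))
  choose φ hφ using hgen
  refine ⟨⟨φ, fun {v w} hvw => Raag.rel_of_commute ?_⟩, Raag.hom_ext fun v => by simp [hφ]⟩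
  rw [hφ, hφ]
  exact (Raag.commute_of hvw).map f
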